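/- Let (A, τ) be an SMV-algebra such that: (i) if F_τ(A) = {1} then τ(A) is a subdirectly irreducible MV-algebra; (ii) the Wajsberg hoop F_τ(A) is trivial or subdirectly irreducible; (iii) F_τ(A) and τ(A) have the disjunction property. Then (A, τ) is subdirectly irreducible. -/

import Mathlib

/-- An MV-algebra `(A, ⊕, ¬, 0)`. -/
class MV (A : Type*) extends Zero A where
  oplus : A → A → A
  mvneg : A → A
  oplus_assoc : ∀ x y z : A, oplus (oplus x y) z = oplus x (oplus y z)
  oplus_comm : ∀ x y : A, oplus x y = oplus y x
  oplus_zero : ∀ x : A, oplus x 0 = x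
  mvneg_mvneg : ∀ x : A, mvneg (mvneg x) = x
  oplus_top : ∀ x : A, oplus x (mvneg 0) = mvneg 0
  luk : ∀ x y : A, oplus (mvneg (oplus (mvneg x) y)) y = oplus (mvneg (oplus (mvneg y) x)) x

namespace MV

variable {A : Type*} [MV A]

/-- The top element `1 = ¬0`. -/
def top : A := mvneg 0
/-- `x → y := ¬x ⊕ y`. -/
def imp (x y : A) : A := oplus (mvneg x) y
/-- `x ⊙ y := ¬(¬x ⊕ ¬y)`. -/
def odot (x y : A) : A := mvneg (oplus (mvneg x) (mvneg y))
/-- `x ⊖ y := ¬(¬x ⊕ y)`. -/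
def ominus (x y : A) : A := mvneg (oplus (mvneg x) y)
/-- Lattice join `x ∨ y := (x → y) → y`. -/
def mvsup (x y : A) : A := imp (imp x y) y
/-- Lattice meet `x ∧ y := x ⊙ (x → y)`. -/
def mvinf (x y : A) : A := odot x (imp x y)
/-- The lattice order: `x ≤ y` iff `x → y = 1`. -/
def mvle (x y : A) : Prop := imp x y = top
/-- Strict order. -/
def mvlt (x y : A) : Prop := mvle x y ∧ x ≠ y

/-- `(A, τ)` is an SMV-algebra. -/
structure IsSMV (τ : A → A) : Prop where
  map_top : τ top = top
  tau_oplus : ∀ x y : A, τ (oplus x y) = oplus (τ x) (τ (ominus y (odot x y)))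
  map_neg : ∀ x : A, τ (mvneg x) = mvneg (τ x)
  tau_fix : ∀ x y : A, τ (oplus (τ x) (τ y)) = oplus (τ x) (τ y)

/-- `(A, τ)` is a state morphism MV-algebra. -/
def IsSMMV (τ : A → A) : Prop := IsSMV τ ∧ ∀ x y : A, τ (oplus x y) = oplus (τ x) (τ y)

/-- An MV-filter. -/
structure IsFilter (F : Set A) : Prop where
  top_mem : top ∈ F
  mp : ∀ a b : A, a ∈ F → imp a b ∈ F → b ∈ F

/-- A `τ`-filter: an MV-filter closed under `τ`. -/
def IsTauFilter (τ : A → A) (F : Set A) : Prop := IsFilter F ∧ ∀ a ∈ F, τ a ∈ F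

/-- Subdirect irreducibility of an SMV-algebra: there is a minimum nontrivial `τ`-filter. -/
def SubdirIrrSMV (τ : A → A) : Prop :=
  ∃ F : Set A, IsTauFilter τ F ∧ F ≠ {top} ∧
    ∀ G : Set A, IsTauFilter τ G → G ≠ {top} → F ⊆ G

/-- A filter of the subalgebra/subhoop with universe `S`. -/
def IsFilterOn (S F : Set A) : Prop :=
  F ⊆ S ∧ top ∈ F ∧ ∀ a b : A, a ∈ F → b ∈ S → imp a b ∈ F → b ∈ F

/-- Subdirect irreducibility of the subalgebra/subhoop with universe `S`:
there is a minimum nontrivial filter on `S`. -/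
def SubdirIrrOn (S : Set A) : Prop :=
  ∃ F : Set A, IsFilterOn S F ∧ F ≠ {top} ∧
    ∀ G : Set A, IsFilterOn S G → G ≠ {top} → F ⊆ G

/-- The set `F_τ(A) = {a : τ a = 1}`. -/
def tauKernel (τ : A → A) : Set A := {a : A | τ a = top}

/-- Homomorphisms of MV-algebras. -/
structure IsMVHom {A B : Type*} [MV A] [MV B] (f : A → B) : Prop where
  map_oplus : ∀ x y : A, f (oplus x y) = oplus (f x) (f y)
  map_neg : ∀ x : A, f (mvneg x) = mvneg (f x)
  map_zero : f 0 = 0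

end MV

open MV

instance MV.instProd {A B : Type*} [MV A] [MV B] : MV (A × B) where
  oplus x y := (oplus x.1 y.1, oplus x.2 y.2)
  mvneg x := (mvneg x.1, mvneg x.2)
  oplus_assoc x y z := by simp [oplus_assoc]
  oplus_comm x y := by simp [oplus_comm x.1 y.1, oplus_comm x.2 y.2]
  oplus_zero x := by simp [oplus_zero]
  mvneg_mvneg x := by simp [mvneg_mvneg]
  oplus_top x := by simp [oplus_top]
  luk x y := by simp [luk]

instance MV.instPi {I : Type*} {A : I → Type*} [∀ i, MV (A i)] : MV (∀ i, A i) where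
  oplus x y i := oplus (x i) (y i)
  mvneg x i := mvneg (x i)
  oplus_assoc x y z := by funext i; simp [oplus_assoc]
  oplus_comm x y := by funext i; exact oplus_comm _ _
  oplus_zero x := by funext i; exact oplus_zero _
  mvneg_mvneg x := by funext i; exact mvneg_mvneg _
  oplus_top x := by funext i; exact oplus_top _
  luk x y := by funext i; exact luk _ _

/-!
If `F_τ(A) ≠ {1}`, every nontrivial `τ`-filter `G` meets `F_τ(A)` nontrivially: for `g ∈ G` with
`τ g ≠ 1` and `1 ≠ x ∈ F_τ(A)`, the join `x ∨ τ g` lies in `G ∩ F_τ(A)`, and it is `≠ 1` by the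
disjunction property. If `F_τ(A) = {1}`, then `τ g ≠ 1` is a nontrivial element of `G ∩ τ(A)`.
In both cases the subset `S` (`F_τ(A)` resp. `τ(A)`) is a subhoop with `s ≤ τ s` on `S`, and the
upward closure of the minimum filter of `S` is then the minimum `τ`-filter of `A`.
-/

namespace MV

variable {A : Type*} [MV A]

section Order

lemma neg_top : mvneg (top : A) = 0 := mvneg_mvneg 0

lemma zero_oplus (x : A) : oplus 0 x = x := by rw [oplus_comm, oplus_zero]

lemma top_oplus (x : A) : oplus top x = top := by rw [oplus_comm]; exact oplus_top x

lemma neg_oplus_self (x : A) : oplus (mvneg x) x = top := by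
  have h := luk x (mvneg 0)
  rw [oplus_top, mvneg_mvneg, zero_oplus] at h
  exact h.symm

lemma mvle_refl (x : A) : mvle x x := neg_oplus_self x

lemma mvle_top (x : A) : mvle x top := oplus_top _

lemma zero_mvle (x : A) : mvle 0 x := top_oplus x

lemma mvle_oplus_right (x c : A) : mvle x (oplus x c) := by
  rw [mvle, imp, ← oplus_assoc, neg_oplus_self, top_oplus]

lemma mvle_antisymm {x y : A} (hxy : mvle x y) (hyx : mvle y x) : x = y := by
  have h := luk x y
  rw [show oplus (mvneg x) y = top from hxy, show oplus (mvneg y) x = top from hyx, neg_top,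
    zero_oplus, zero_oplus] at h
  exact h.symm

lemma eq_top_of_top_mvle {x : A} (h : mvle top x) : x = top :=
  (mvle_antisymm h (mvle_top x)).symm

lemma mvsup_eq_oplus_ominus (x y : A) : mvsup x y = oplus x (ominus y x) := by
  unfold mvsup imp ominus
  rw [luk, oplus_comm]

lemma mvle_iff_exists_oplus {x y : A} : mvle x y ↔ ∃ c, y = oplus x c := by
  refine ⟨fun hxy => ⟨ominus y x, ?_⟩, fun ⟨c, hc⟩ => hc ▸ mvle_oplus_right x c⟩
  have hs := mvsup_eq_oplus_ominus x y
  rwa [mvsup, show imp x y = top from hxy, imp, neg_top, zero_oplus] at hs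

lemma mvle_trans {x y z : A} (hxy : mvle x y) (hyz : mvle y z) : mvle x z := by
  obtain ⟨c, rfl⟩ := mvle_iff_exists_oplus.1 hxy
  obtain ⟨d, rfl⟩ := mvle_iff_exists_oplus.1 hyz
  exact mvle_iff_exists_oplus.2 ⟨oplus c d, oplus_assoc x c d⟩

lemma mvneg_antitone {x y : A} (hxy : mvle x y) : mvle (mvneg y) (mvneg x) := by
  rw [mvle, imp, mvneg_mvneg, oplus_comm]; exact hxy

lemma oplus_mono_right {x y : A} (z : A) (hxy : mvle x y) : mvle (oplus z x) (oplus z y) := by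
  obtain ⟨c, rfl⟩ := mvle_iff_exists_oplus.1 hxy
  exact mvle_iff_exists_oplus.2 ⟨c, (oplus_assoc z x c).symm⟩

lemma oplus_mono {x y x' y' : A} (hx : mvle x x') (hy : mvle y y') :
    mvle (oplus x y) (oplus x' y') := by
  refine mvle_trans (oplus_mono_right x hy) ?_
  rw [oplus_comm x, oplus_comm x']
  exact oplus_mono_right y' hx

lemma odot_mono {x y x' y' : A} (hx : mvle x x') (hy : mvle y y') :
    mvle (odot x y) (odot x' y') :=
  mvneg_antitone (oplus_mono (mvneg_antitone hx) (mvneg_antitone hy))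

lemma mvle_imp (a b : A) : mvle b (imp a b) := by
  rw [imp, oplus_comm]; exact mvle_oplus_right b _

lemma ominus_mvle (a b : A) : mvle (ominus a b) a := by
  rw [mvle, imp, ominus, mvneg_mvneg, oplus_comm (mvneg a), oplus_assoc, neg_oplus_self]
  exact oplus_top _

lemma odot_imp_mvle (a b : A) : mvle (odot a (imp a b)) b := by
  rw [mvle, imp, odot, imp, mvneg_mvneg, oplus_assoc, luk, oplus_comm _ a, ← oplus_assoc,
    neg_oplus_self, top_oplus]

lemma imp_imp_odot (a b : A) : imp a (imp b (odot a b)) = top := by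
  rw [imp, imp, odot, ← oplus_assoc, oplus_comm (oplus (mvneg a) (mvneg b)), neg_oplus_self]

lemma mvle_mvsup_left (x y : A) : mvle x (mvsup x y) := by
  rw [mvsup_eq_oplus_ominus]; exact mvle_oplus_right _ _

lemma mvle_mvsup_right (x y : A) : mvle y (mvsup x y) :=
  mvle_iff_exists_oplus.2 ⟨mvneg (oplus (mvneg x) y), oplus_comm _ _⟩

end Order

section Filters

lemma exists_ne_top_of_ne_singleton {F : Set A} (htop : (top : A) ∈ F) (hne : F ≠ {top}) :
    ∃ x ∈ F, x ≠ top := by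
  by_contra! hc
  exact hne (Set.eq_singleton_iff_unique_mem.2 ⟨htop, hc⟩)

lemma IsFilter.mem_of_mvle {F : Set A} (hF : IsFilter F) {a b : A} (ha : a ∈ F)
    (hab : mvle a b) : b ∈ F :=
  hF.mp a b ha (hab ▸ hF.top_mem)

lemma IsFilter.inter_isFilterOn {G : Set A} (hG : IsFilter G) {S : Set A} (hS : top ∈ S) :
    IsFilterOn S (G ∩ S) :=
  ⟨Set.inter_subset_right, ⟨hG.top_mem, hS⟩,
    fun a b ⟨haG, _⟩ hbS ⟨habG, _⟩ => ⟨hG.mp a b haG habG, hbS⟩⟩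

structure IsSubhoop (S : Set A) : Prop where
  top_mem : top ∈ S
  odot_mem : ∀ a b : A, a ∈ S → b ∈ S → odot a b ∈ S
  imp_mem : ∀ a b : A, a ∈ S → b ∈ S → imp a b ∈ S

lemma IsFilterOn.odot_mem {S F : Set A} (hS : IsSubhoop S) (hF : IsFilterOn S F) {a b : A}
    (ha : a ∈ F) (hb : b ∈ F) : odot a b ∈ F := by
  obtain ⟨hFS, hFtop, hFmp⟩ := hF
  have hab : odot a b ∈ S := hS.odot_mem a b (hFS ha) (hFS hb)
  have himp : imp b (odot a b) ∈ F :=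
    hFmp a _ ha (hS.imp_mem b _ (hFS hb) hab) (imp_imp_odot a b ▸ hFtop)
  exact hFmp b _ hb hab himp

def upClosure (F : Set A) : Set A := {b | ∃ f ∈ F, mvle f b}

lemma subset_upClosure (F : Set A) : F ⊆ upClosure F := fun f hf => ⟨f, hf, mvle_refl f⟩

lemma IsFilter.upClosure_subset {F G : Set A} (hG : IsFilter G) (hFG : F ⊆ G) :
    upClosure F ⊆ G :=
  fun _ ⟨_, hf, hfb⟩ => hG.mem_of_mvle (hFG hf) hfb

lemma IsFilterOn.isFilter_upClosure {S F : Set A} (hS : IsSubhoop S) (hF : IsFilterOn S F) :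
    IsFilter (upClosure F) where
  top_mem := ⟨top, hF.2.1, mvle_refl top⟩
  mp := fun a b ⟨f, hf, hfa⟩ ⟨f', hf', hf'ab⟩ =>
    ⟨odot f f', hF.odot_mem hS hf hf', mvle_trans (odot_mono hfa hf'ab) (odot_imp_mvle a b)⟩

end Filters

section SMV

variable {τ : A → A}

lemma IsSMV.map_zero (h : IsSMV τ) : τ 0 = 0 := by
  simpa only [neg_top, h.map_top] using h.map_neg top

lemma IsSMV.map_map (h : IsSMV τ) (x : A) : τ (τ x) = τ x := by
  simpa only [h.map_zero, oplus_zero] using h.tau_fix x 0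

lemma IsSMV.monotone (h : IsSMV τ) {x y : A} (hxy : mvle x y) : mvle (τ x) (τ y) := by
  obtain ⟨c, rfl⟩ := mvle_iff_exists_oplus.1 hxy
  rw [h.tau_oplus]
  exact mvle_oplus_right _ _

lemma IsSMV.eq_top_of_mvle (h : IsSMV τ) {x y : A} (hx : τ x = top) (hxy : mvle x y) :
    τ y = top :=
  eq_top_of_top_mvle (hx ▸ h.monotone hxy)

lemma IsSMV.isSubhoop_range (h : IsSMV τ) : IsSubhoop (Set.range τ) := by
  have neg_mem : ∀ {a}, a ∈ Set.range τ → mvneg a ∈ Set.range τ :=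
    fun ⟨u, hu⟩ => ⟨mvneg u, hu ▸ h.map_neg u⟩
  have oplus_mem : ∀ {a b}, a ∈ Set.range τ → b ∈ Set.range τ → oplus a b ∈ Set.range τ :=
    fun ⟨u, hu⟩ ⟨v, hv⟩ => ⟨oplus (τ u) (τ v), hu ▸ hv ▸ h.tau_fix u v⟩
  exact ⟨⟨top, h.map_top⟩, fun _ _ ha hb => neg_mem (oplus_mem (neg_mem ha) (neg_mem hb)),
    fun _ _ ha hb => oplus_mem (neg_mem ha) hb⟩

lemma IsSMV.odot_mem_tauKernel (h : IsSMV τ) {x y : A} (hx : x ∈ tauKernel τ)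
    (hy : y ∈ tauKernel τ) : odot x y ∈ tauKernel τ := by
  have hx : τ x = top := hx
  have hy : τ y = top := hy
  -- `τ(¬x ⊕ ¬y) = τ(¬x) ⊕ τ(¬y ⊖ (¬x ⊙ ¬y))`, where `τ(¬x) = 0` and `τ(¬y ⊖ …) ≤ τ(¬y) = 0`.
  have hrest : τ (ominus (mvneg y) (odot (mvneg x) (mvneg y))) = 0 := by
    have hle := h.monotone (ominus_mvle (mvneg y) (odot (mvneg x) (mvneg y)))
    rw [h.map_neg, hy, neg_top] at hle
    exact mvle_antisymm hle (zero_mvle _)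
  have hneg : mvneg (τ (odot x y)) = 0 := by
    rw [← h.map_neg, odot, mvneg_mvneg, h.tau_oplus, h.map_neg, hx, neg_top, zero_oplus, hrest]
  show τ (odot x y) = top
  rw [← mvneg_mvneg (τ (odot x y)), hneg, top]

lemma IsSMV.isSubhoop_tauKernel (h : IsSMV τ) : IsSubhoop (tauKernel τ) :=
  ⟨h.map_top, fun _ _ => h.odot_mem_tauKernel,
    fun a b _ hb => h.eq_top_of_mvle hb (mvle_imp a b)⟩

lemma IsSMV.subdirIrrSMV_of_subdirIrrOn (h : IsSMV τ) {S : Set A} (hS : IsSubhoop S)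
    (hSτ : ∀ s ∈ S, mvle s (τ s)) (hSI : SubdirIrrOn S)
    (hmeet : ∀ G, IsTauFilter τ G → G ≠ {top} → G ∩ S ≠ {top}) : SubdirIrrSMV τ := by
  obtain ⟨F, hF, hFne, hFmin⟩ := hSI
  refine ⟨upClosure F, ⟨hF.isFilter_upClosure hS, ?_⟩, ?_, ?_⟩
  · rintro b ⟨f, hf, hfb⟩
    exact ⟨f, hf, mvle_trans (hSτ f (hF.1 hf)) (h.monotone hfb)⟩
  · obtain ⟨x, hxF, hx⟩ := exists_ne_top_of_ne_singleton hF.2.1 hFne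
    exact fun heq => hx (heq ▸ subset_upClosure F hxF : x ∈ ({top} : Set A))
  · intro G hG hGne
    exact hG.1.upClosure_subset
      ((hFmin _ (hG.1.inter_isFilterOn hS.top_mem) (hmeet G hG hGne)).trans
        Set.inter_subset_left)

lemma inter_range_ne_singleton (hk : tauKernel τ = {top}) {G : Set A}
    (hG : IsTauFilter τ G) (hGne : G ≠ {top}) : G ∩ Set.range τ ≠ {top} := by
  obtain ⟨g, hgG, hg⟩ := exists_ne_top_of_ne_singleton hG.1.top_mem hGne
  have hτg : τ g ≠ top := fun hτg => hg (hk ▸ hτg : g ∈ ({top} : Set A))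
  exact fun heq => hτg (heq ▸ ⟨hG.2 g hgG, g, rfl⟩ : τ g ∈ ({top} : Set A))

lemma IsSMV.inter_tauKernel_ne_singleton (h : IsSMV τ)
    (hdisj : ∀ x y : A, x ∈ tauKernel τ → y ∈ Set.range τ → mvsup x y = top →
      x = top ∨ y = top)
    (hk : tauKernel τ ≠ {top}) {G : Set A} (hG : IsTauFilter τ G) (hGne : G ≠ {top}) :
    G ∩ tauKernel τ ≠ {top} := by
  obtain ⟨g, hgG, hg⟩ := exists_ne_top_of_ne_singleton hG.1.top_mem hGne
  intro heq
  by_cases hgk : τ g = top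
  · exact hg (heq ▸ ⟨hgG, hgk⟩ : g ∈ ({top} : Set A))
  obtain ⟨x, hxk, hx⟩ := exists_ne_top_of_ne_singleton (show top ∈ tauKernel τ from h.map_top) hk
  have hsup : mvsup x (τ g) ∈ G ∩ tauKernel τ :=
    ⟨hG.1.mem_of_mvle (hG.2 g hgG) (mvle_mvsup_right x (τ g)),
      h.eq_top_of_mvle hxk (mvle_mvsup_left x (τ g))⟩
  rw [heq] at hsup
  exact (hdisj x (τ g) hxk ⟨g, rfl⟩ hsup).elim hx hgk

end SMV

end MV

open MV

/-- Converse characterization: an SMV-algebra satisfying conditions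
(i), (ii), (iii) is subdirectly irreducible. -/
theorem subdirectly_irreducible_of_conditions {A : Type*} [MV A] (τ : A → A)
    (h : IsSMV τ)
    (h1 : tauKernel τ = ({top} : Set A) → SubdirIrrOn (Set.range τ))
    (h2 : tauKernel τ = ({top} : Set A) ∨ SubdirIrrOn (tauKernel τ))
    (h3 : ∀ x y : A, x ∈ tauKernel τ → y ∈ Set.range τ → mvsup x y = top →
      x = top ∨ y = top) :
    SubdirIrrSMV τ := by
  by_cases hk : tauKernel τ = ({top} : Set A)
  · refine h.subdirIrrSMV_of_subdirIrrOn h.isSubhoop_range ?_ (h1 hk)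
      fun _ => inter_range_ne_singleton hk
    rintro _ ⟨u, rfl⟩
    rw [h.map_map]
    exact mvle_refl _
  · refine h.subdirIrrSMV_of_subdirIrrOn h.isSubhoop_tauKernel ?_ (h2.resolve_left hk)
      fun _ => h.inter_tauKernel_ne_singleton h3 hk
    intro s hs
    rw [show τ s = top from hs]
    exact mvle_top s
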